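/- arXiv:1703.07196 — 2 statements merged into one kernel-verified Lean document; each statement's English description precedes it below -/
import Mathlib

section
/- For formal power series in q and Laurent variable y, the Jacobi triple product identity holds: θ₁(q,y) = Σ_{n∈ℤ} (-1)^n q^{(n+1/2)²} y^{n+1/2} equals q^{1/4}(y^{1/2} - y^{-1/2}) ∏_{n≥1} (1-q^{2n})(1-q^{2n}y)(1-q^{2n}y^{-1}). -/
/-!
Jacobi triple product identity, as formal power series in `Q = q^(1/4)` with
coefficients in the Laurent polynomial ring `ℤ[Y^{±1}]`, where `Y = y^(1/2)`.
So `q^((n+1/2)^2) = Q^((2n+1)^2)`, `y^(n+1/2) = Y^(2n+1)`, `q^(2n) = Q^(8n)`.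
The infinite product is encoded coefficientwise: a series `P` is *the* infinite
product `∏_{n≥1} f n` iff for every degree `d` the coefficient of `Q^d` in `P`
agrees with that of the partial product `∏_{n=1}^{d+1} f n` (the tail factors
are `≡ 1` modulo high powers of `Q`, so partial products stabilize).
-/

open PowerSeries LaurentPolynomial

noncomputable section

/-- `θ₁(q,y) = Σ_{n∈ℤ} (-1)^n q^((n+1/2)^2) y^(n+1/2)` as a power series in
`Q = q^(1/4)` over `ℤ[y^{±1/2}]`. -/
def theta1 : PowerSeries (LaurentPolynomial ℤ) :=
  PowerSeries.mk fun k =>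
    ∑ n ∈ Finset.Icc (-(k : ℤ)) (k : ℤ),
      if (2 * n + 1) ^ 2 = (k : ℤ) then ((n.negOnePow : ℤ) : LaurentPolynomial ℤ) * T (2 * n + 1)
      else 0

/-- the `n`-th factor `(1 - q^(2n))(1 - q^(2n) y)(1 - q^(2n) y^{-1})` of the triple
product, with `q^(2n) = Q^(8n)`, `y = Y^2`, `y⁻¹ = Y^(-2)`. -/
def tripleFactor (n : ℕ) : PowerSeries (LaurentPolynomial ℤ) :=
  (1 - (PowerSeries.X : PowerSeries (LaurentPolynomial ℤ)) ^ (8 * (n + 1))) *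
    (1 - PowerSeries.C (R := LaurentPolynomial ℤ) (T 2) * PowerSeries.X ^ (8 * (n + 1))) *
    (1 - PowerSeries.C (R := LaurentPolynomial ℤ) (T (-2)) * PowerSeries.X ^ (8 * (n + 1)))

/-!
For a unit `u`, multiplying by one factor at a time gives the finite form
`∏_{k<N} (1 + u q^(k+1)) (1 + u⁻¹ q^k) = ∑_{|m| ≤ N} [2N, N+m]_q u^m q^(m(m+1)/2)`.
Since `(q;q)_{N+m} (q;q)_{N-m} [2N, N+m]_q = (q;q)_{2N}`, the product `(q;q)_N [2N, N+m]_q` is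
`≡ 1` modulo `q^(N+1-|m|)`, so after multiplying by `(q;q)_N` the coefficients stabilise as
`N → ∞` to those of `∑ u^m q^(m(m+1)/2)`. Take `q = Q^8` and `u = -y`; the factor
`y^(1/2) - y^(-1/2) = y^(1/2) (1 - y⁻¹)` is the `k = 0` factor `1 + u⁻¹` of the finite form.
-/

open Finset

section QAnalogues

variable {R : Type*} [CommRing R] (q : R)

def qPochhammer (k : ℕ) : R := ∏ j ∈ range k, (1 - q ^ (j + 1))

@[simp] lemma qPochhammer_zero : qPochhammer q 0 = 1 := prod_range_zero _

lemma qPochhammer_succ (k : ℕ) : qPochhammer q (k + 1) = qPochhammer q k * (1 - q ^ (k + 1)) :=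
  prod_range_succ _ _

lemma qPochhammer_add (k l : ℕ) :
    qPochhammer q (k + l) = qPochhammer q k * ∏ j ∈ range l, (1 - q ^ (k + j + 1)) := by
  simp only [qPochhammer, prod_range_add, add_assoc]

/-- The Gaussian binomial coefficient `[2N, N + m]_q`
(see `qPochhammer_mul_qPochhammer_mul_qCentralBinom`), defined by the recursion that
multiplying `∏_{k<N} (1 + u q^(k+1)) (1 + u⁻¹ q^k)` by its next factor produces. -/
def qCentralBinom : ℕ → ℤ → R
  | 0, m => if m = 0 then 1 else 0
  | N + 1, m => (1 + q ^ (2 * N + 1)) * qCentralBinom N m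
      + q ^ ((N : ℤ) + 1 - m).toNat * qCentralBinom N (m - 1)
      + q ^ ((N : ℤ) + 1 + m).toNat * qCentralBinom N (m + 1)

variable {q} in
lemma qCentralBinom_eq_zero {N : ℕ} {m : ℤ} (h : N < m.natAbs) : qCentralBinom q N m = 0 := by
  induction N generalizing m with
  | zero => simp only [qCentralBinom, ite_eq_right_iff]; omega
  | succ N ih => rw [qCentralBinom, ih (by omega), ih (by omega), ih (by omega)]; ring

lemma qCentralBinom_neg (N : ℕ) (m : ℤ) : qCentralBinom q N (-m) = qCentralBinom q N m := by
  induction N generalizing m with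
  | zero => simp [qCentralBinom]
  | succ N ih =>
    rw [qCentralBinom, qCentralBinom, show -m - 1 = -(m + 1) by ring,
      show -m + 1 = -(m - 1) by ring, ih, ih, ih, sub_neg_eq_add, ← sub_eq_add_neg]
    ring

lemma qCentralBinom_self (N : ℕ) : qCentralBinom q N N = 1 := by
  induction N with
  | zero => simp [qCentralBinom]
  | succ N ih =>
    rw [qCentralBinom, qCentralBinom_eq_zero (m := (N + 1 : ℕ)) (by omega),
      qCentralBinom_eq_zero (m := (N + 1 : ℕ) + 1) (by omega)]
    push_cast
    simp [ih]

theorem qPochhammer_mul_qPochhammer_mul_qCentralBinom (N a b : ℕ) (hab : a + b = 2 * N) :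
    qPochhammer q a * qPochhammer q b * qCentralBinom q N (a - N) = qPochhammer q (2 * N) := by
  induction N generalizing a b with
  | zero =>
    obtain ⟨rfl, rfl⟩ : a = 0 ∧ b = 0 := by omega
    simp [qCentralBinom]
  | succ N ih =>
    have shifted (a b : ℕ) (hab : a + b = 2 * N) :
        qPochhammer q (a + 1) * qPochhammer q (b + 1) * qCentralBinom q N (a - N - 1) =
          (1 - q ^ (a + 1)) * (1 - q ^ a) * qPochhammer q (2 * N) := by
      rcases a with _ | a
      · rw [qCentralBinom_eq_zero (by omega)]
        simp
      · rw [← ih a (b + 1) (by omega), qPochhammer_succ q (a + 1), qPochhammer_succ q a,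
          show ((a + 1 : ℕ) : ℤ) - N - 1 = a - N by omega]
        ring
    rcases a with _ | a
    · rw [Nat.cast_zero, zero_sub, qCentralBinom_neg, qCentralBinom_self,
        show b = 2 * (N + 1) by omega]
      simp
    rcases b with _ | b
    · rw [show ((a + 1 : ℕ) : ℤ) - (N + 1 : ℕ) = (N + 1 : ℕ) by omega, qCentralBinom_self,
        show a + 1 = 2 * (N + 1) by omega]
      simp
    have hab' : a + b = 2 * N := by omega
    have hcenter : qPochhammer q (a + 1) * qPochhammer q (b + 1) * qCentralBinom q N (a - N) =
        (1 - q ^ (a + 1)) * (1 - q ^ (b + 1)) * qPochhammer q (2 * N) := by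
      rw [← ih a b hab', qPochhammer_succ, qPochhammer_succ]
      ring
    have hleft := shifted a b hab'
    have hright := shifted b a (by omega)
    rw [show (b : ℤ) - N - 1 = -(a - N + 1) by omega, qCentralBinom_neg] at hright
    rw [show ((a + 1 : ℕ) : ℤ) - (N + 1 : ℕ) = a - N by omega, qCentralBinom,
      show ((N : ℤ) + 1 - (a - N)).toNat = b + 1 by omega,
      show ((N : ℤ) + 1 + (a - N)).toNat = a + 1 by omega,
      show 2 * (N + 1) = 2 * N + 1 + 1 by ring, qPochhammer_succ q (2 * N + 1),
      qPochhammer_succ q (2 * N), show 2 * N + 1 = a + b + 1 by omega]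
    linear_combination
      (1 + q ^ (a + b + 1)) * hcenter + q ^ (b + 1) * hleft + q ^ (a + 1) * hright

lemma dvd_mul_sub_one {a x y : R} (hx : a ∣ x - 1) (hy : a ∣ y - 1) : a ∣ x * y - 1 := by
  rw [show x * y - 1 = x * (y - 1) + (x - 1) by ring]
  exact dvd_add (dvd_mul_of_dvd_right hy x) hx

lemma pow_succ_dvd_prod_one_sub_pow_sub_one (k l : ℕ) :
    q ^ (k + 1) ∣ ∏ j ∈ range l, (1 - q ^ (k + j + 1)) - 1 :=
  prod_induction _ (fun x => q ^ (k + 1) ∣ x - 1) (fun _ _ => dvd_mul_sub_one) (by simp)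
    fun j _ => by simpa using pow_dvd_pow q (by omega : k + 1 ≤ k + j + 1)

variable {q}

lemma isUnit_qPochhammer (hq : q ∈ Ideal.jacobson ⊥) (k : ℕ) : IsUnit (qPochhammer q k) :=
  IsUnit.prod_iff.mpr fun j _ => by
    simpa [pow_succ', sub_eq_add_neg, add_comm] using Ideal.mem_jacobson_bot.mp hq (-q ^ j)

theorem pow_dvd_qPochhammer_mul_qCentralBinom_sub_one (hq : q ∈ Ideal.jacobson ⊥) {N : ℕ}
    {m : ℤ} (hm : m.natAbs ≤ N) :
    q ^ (N + 1 - m.natAbs) ∣ qPochhammer q N * qCentralBinom q N m - 1 := by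
  -- Cancelling the unit `(q;q)_c (q;q)_d`, where `c = N - |m|` and `d = N + |m|`, turns
  -- `(q;q)_N [2N, N+m]_q` into `((q;q)_N / (q;q)_c) ((q;q)_{2N} / (q;q)_d)`, a product of
  -- factors `1 - q^j` with `j > c`.
  set c := N - m.natAbs
  set d := N + m.natAbs
  have hkey :
      qPochhammer q c * qPochhammer q d * qCentralBinom q N m = qPochhammer q (2 * N) := by
    rcases le_or_gt 0 m with hm0 | hm0
    · rw [mul_comm (qPochhammer q c),
        ← qPochhammer_mul_qPochhammer_mul_qCentralBinom q N d c (by omega)]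
      congr 2; omega
    · rw [← qPochhammer_mul_qPochhammer_mul_qCentralBinom q N c d (by omega)]
      congr 2; omega
  have hN :
      qPochhammer q N = qPochhammer q c * ∏ j ∈ range m.natAbs, (1 - q ^ (c + j + 1)) := by
    rw [← qPochhammer_add]; congr 1; omega
  have h2N :
      qPochhammer q (2 * N) = qPochhammer q d * ∏ j ∈ range c, (1 - q ^ (d + j + 1)) := by
    rw [← qPochhammer_add]; congr 1; omega
  have hunit : IsUnit (qPochhammer q c * qPochhammer q d) :=
    (isUnit_qPochhammer hq c).mul (isUnit_qPochhammer hq d)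
  have htails : qPochhammer q N * qCentralBinom q N m - 1 =
      (∏ j ∈ range m.natAbs, (1 - q ^ (c + j + 1))) *
        ∏ j ∈ range c, (1 - q ^ (d + j + 1)) - 1 :=
    hunit.mul_left_cancel (by
      linear_combination qPochhammer q N * hkey + qPochhammer q (2 * N) * hN +
        qPochhammer q c * (∏ j ∈ range m.natAbs, (1 - q ^ (c + j + 1))) * h2N)
  rw [htails, show N + 1 - m.natAbs = c + 1 by omega]
  exact dvd_mul_sub_one (pow_succ_dvd_prod_one_sub_pow_sub_one q c _)
    ((pow_dvd_pow q (by omega)).trans (pow_succ_dvd_prod_one_sub_pow_sub_one q d c))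

end QAnalogues

def triangular (m : ℤ) : ℕ := (m * (m + 1) / 2).toNat

lemma two_mul_triangular (m : ℤ) : 2 * (triangular m : ℤ) = m * (m + 1) := by
  have hnonneg : 0 ≤ m * (m + 1) := by
    rcases le_or_gt 0 m with h | h <;> nlinarith
  rw [triangular, Int.toNat_of_nonneg (by omega),
    Int.mul_ediv_cancel' (even_iff_two_dvd.mp (Int.even_mul_succ_self m))]

lemma triangular_add_one (m : ℤ) : (triangular (m + 1) : ℤ) = triangular m + m + 1 := by
  linarith [two_mul_triangular m, two_mul_triangular (m + 1)]

lemma natAbs_le_two_mul_triangular_add_one (m : ℤ) : m.natAbs ≤ 2 * triangular m + 1 := by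
  zify
  rw [two_mul_triangular]
  rcases le_or_gt 0 m with hm | hm
  · rw [abs_of_nonneg hm]; nlinarith
  · rw [abs_of_neg hm]; nlinarith [sq_nonneg (m + 1)]

lemma sum_Icc_add_eq_sum_Icc_of_eq_zero {M : Type*} [AddCommMonoid M] {g : ℤ → M} {N : ℕ}
    (hg : ∀ m, N < m.natAbs → g m = 0) {a b c : ℤ} (ha : a + c ≤ -N) (hb : N ≤ b + c) :
    ∑ m ∈ Icc a b, g (m + c) = ∑ m ∈ Icc (-N : ℤ) N, g m := by
  calc ∑ m ∈ Icc a b, g (m + c) = ∑ m ∈ Icc (a + c) (b + c), g m := by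
        rw [← map_add_right_Icc, sum_map]; rfl
    _ = ∑ m ∈ Icc (-N : ℤ) N, g m := by
        refine (sum_subset (Icc_subset_Icc ha hb) fun m hm hm' => hg m ?_).symm
        simp only [mem_Icc] at hm hm'
        omega

section FiniteTripleProduct

variable {R : Type*} [CommRing R] (q : R) (u : Rˣ)

lemma qCentralBinom_succ_mul_zpow_mul_pow (N : ℕ) (m : ℤ) :
    qCentralBinom q (N + 1) m * ↑(u ^ m) * q ^ triangular m =
      (1 + q ^ (2 * N + 1)) * (qCentralBinom q N m * ↑(u ^ m) * q ^ triangular m) +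
      qCentralBinom q N (m - 1) * ↑(u ^ (m - 1)) * q ^ triangular (m - 1) *
        (↑u * q ^ (N + 1)) +
      qCentralBinom q N (m + 1) * ↑(u ^ (m + 1)) * q ^ triangular (m + 1) *
        (↑u⁻¹ * q ^ N) := by
  have hdown : q ^ ((N : ℤ) + 1 - m).toNat * qCentralBinom q N (m - 1) * ↑(u ^ m) *
      q ^ triangular m =
      qCentralBinom q N (m - 1) * ↑(u ^ (m - 1)) * q ^ triangular (m - 1) *
        (↑u * q ^ (N + 1)) := by
    by_cases hm : N < (m - 1).natAbs
    · simp [qCentralBinom_eq_zero hm]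
    have hT := triangular_add_one (m - 1)
    rw [sub_add_cancel] at hT
    have hpow : q ^ triangular (m - 1) * q ^ (N + 1) =
        q ^ ((N : ℤ) + 1 - m).toNat * q ^ triangular m := by
      rw [← pow_add, ← pow_add]; congr 1; omega
    rw [show (↑(u ^ m) : R) = ↑(u ^ (m - 1)) * ↑u by
      rw [← Units.val_mul, ← zpow_add_one, sub_add_cancel]]
    linear_combination (-(qCentralBinom q N (m - 1) * ↑(u ^ (m - 1)) * ↑u)) * hpow
  have hup : q ^ ((N : ℤ) + 1 + m).toNat * qCentralBinom q N (m + 1) * ↑(u ^ m) *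
      q ^ triangular m =
      qCentralBinom q N (m + 1) * ↑(u ^ (m + 1)) * q ^ triangular (m + 1) *
        (↑u⁻¹ * q ^ N) := by
    by_cases hm : N < (m + 1).natAbs
    · simp [qCentralBinom_eq_zero hm]
    have hT := triangular_add_one m
    have hpow : q ^ triangular (m + 1) * q ^ N =
        q ^ ((N : ℤ) + 1 + m).toNat * q ^ triangular m := by
      rw [← pow_add, ← pow_add]; congr 1; omega
    rw [show (↑(u ^ m) : R) = ↑(u ^ (m + 1)) * ↑u⁻¹ by
      rw [← Units.val_mul, zpow_add_one, mul_inv_cancel_right]]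
    linear_combination (-(qCentralBinom q N (m + 1) * ↑(u ^ (m + 1)) * ↑u⁻¹)) * hpow
  rw [qCentralBinom]
  linear_combination hdown + hup

theorem jacobi_triple_product_finite (N : ℕ) :
    ∏ k ∈ range N, (1 + ↑u * q ^ (k + 1)) * (1 + ↑u⁻¹ * q ^ k) =
      ∑ m ∈ Icc (-N : ℤ) N, qCentralBinom q N m * ↑(u ^ m) * q ^ triangular m := by
  induction N with
  | zero => simp [qCentralBinom, triangular]
  | succ N ih =>
    set t : ℤ → R := fun m => qCentralBinom q N m * ↑(u ^ m) * q ^ triangular m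
    have shift (c : ℤ) (hc : |c| ≤ 1) (f : R) :
        ∑ m ∈ Icc (-(N + 1 : ℕ) : ℤ) (N + 1 : ℕ), t (m + c) * f =
          (∑ m ∈ Icc (-N : ℤ) N, t m) * f := by
      rw [sum_mul]
      refine sum_Icc_add_eq_sum_Icc_of_eq_zero (g := fun m => t m * f)
        (fun m hm => by simp [t, qCentralBinom_eq_zero hm]) ?_ ?_ <;>
      · rw [abs_le] at hc; push_cast; omega
    symm
    calc
      _ = ∑ m ∈ Icc (-(N + 1 : ℕ) : ℤ) (N + 1 : ℕ),
            (t (m + 0) * (1 + q ^ (2 * N + 1)) + t (m + -1) * (↑u * q ^ (N + 1)) +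
              t (m + 1) * (↑u⁻¹ * q ^ N)) :=
        sum_congr rfl fun m _ => by
          simp only [t, add_zero, ← sub_eq_add_neg]
          rw [qCentralBinom_succ_mul_zpow_mul_pow]
          ring
      _ = _ := by
        rw [sum_add_distrib, sum_add_distrib, shift 0 (by simp), shift (-1) (by simp),
          shift 1 (by simp), prod_range_succ, ih]
        linear_combination (-(∑ m ∈ Icc (-N : ℤ) N, t m) * q ^ (2 * N + 1)) * u.mul_inv

theorem jacobi_triple_product_truncated (N : ℕ) :
    (1 + ↑u⁻¹) * ∏ k ∈ range N,
        (1 - q ^ (k + 1)) * (1 + ↑u * q ^ (k + 1)) * (1 + ↑u⁻¹ * q ^ (k + 1)) =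
      (1 + ↑u⁻¹ * q ^ N) * qPochhammer q N *
        ∑ m ∈ Icc (-N : ℤ) N, qCentralBinom q N m * ↑(u ^ m) * q ^ triangular m := by
  have hshift : (1 + ↑u⁻¹) * ∏ k ∈ range N, (1 + ↑u⁻¹ * q ^ (k + 1)) =
      (1 + ↑u⁻¹ * q ^ N) * ∏ k ∈ range N, (1 + ↑u⁻¹ * q ^ k) := by
    have h := (prod_range_succ' (fun k => 1 + ↑u⁻¹ * q ^ k) N).symm.trans
      (prod_range_succ _ N)
    simp only [pow_zero, mul_one] at h
    linear_combination h
  rw [← jacobi_triple_product_finite, qPochhammer]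
  simp only [prod_mul_distrib]
  linear_combination (∏ k ∈ range N, (1 - q ^ (k + 1))) *
    (∏ k ∈ range N, (1 + ↑u * q ^ (k + 1))) * hshift

end FiniteTripleProduct

lemma PowerSeries.X_mem_jacobson_bot {S : Type*} [CommRing S] :
    (X : S⟦X⟧) ∈ Ideal.jacobson ⊥ :=
  Ideal.mem_jacobson_bot.mpr fun f => isUnit_iff_constantCoeff.mpr (by simp)

lemma PowerSeries.coeff_X_pow_mul_of_X_pow_dvd_sub_one {S : Type*} [CommRing S] {f : S⟦X⟧}
    {j k e : ℕ} (hf : X ^ k ∣ f - 1) (he : e < j + k) :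
    coeff e (X ^ j * f) = if e = j then 1 else 0 := by
  rw [coeff_X_pow_mul']
  by_cases hje : j ≤ e
  · have hcoeff := X_pow_dvd_iff.mp hf (e - j) (by omega)
    rw [map_sub, sub_eq_zero, coeff_one] at hcoeff
    rw [if_pos hje, hcoeff]
    exact if_congr (by omega) rfl rfl
  · rw [if_neg hje, if_neg (by omega)]

def negY : ℤ[T;T⁻¹]⟦X⟧ˣ where
  val := -PowerSeries.C (T 2)
  inv := -PowerSeries.C (T (-2))
  val_inv := by rw [neg_mul_neg, ← map_mul, ← T_add, add_neg_cancel, T_zero, map_one]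
  inv_val := by rw [neg_mul_neg, ← map_mul, ← T_add, neg_add_cancel, T_zero, map_one]

lemma val_negY_zpow (m : ℤ) :
    (↑(negY ^ m) : ℤ[T;T⁻¹]⟦X⟧) =
      PowerSeries.C (((m.negOnePow : ℤ) : ℤ[T;T⁻¹]) * T (2 * m)) := by
  induction m using Int.induction_on with
  | zero => simp
  | succ i ih =>
    rw [zpow_add_one, Units.val_mul, ih, Int.negOnePow_succ, mul_add_one, T_add]
    simp only [negY, Units.val_neg, Int.cast_neg, map_neg, map_mul]
    ring
  | pred i ih =>
    rw [zpow_sub_one, Units.val_mul, ih, Int.negOnePow_sub, mul_sub_one, T_sub]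
    simp only [negY, Units.inv_mk, Int.negOnePow_one, mul_neg_one, Units.val_neg, Int.cast_neg,
      map_neg, map_mul]
    ring

lemma tripleFactor_eq (n : ℕ) :
    tripleFactor n = (1 - (X ^ 8) ^ (n + 1)) *
      (1 + (negY : ℤ[T;T⁻¹]⟦X⟧) * (X ^ 8) ^ (n + 1)) *
        (1 + (↑negY⁻¹ : ℤ[T;T⁻¹]⟦X⟧) * (X ^ 8) ^ (n + 1)) := by
  simp only [tripleFactor, negY, Units.inv_mk, ← pow_mul]
  ring

lemma coeff_C_one_sub_T_mul_prod_tripleFactor (e : ℕ) :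
    coeff e (PowerSeries.C (1 - T (-2)) * ∏ n ∈ range (e + 1), tripleFactor n) =
      ∑ m ∈ Icc (-(e + 1 : ℕ) : ℤ) (e + 1 : ℕ),
        if e = 8 * triangular m then ((m.negOnePow : ℤ) : ℤ[T;T⁻¹]) * T (2 * m) else 0 := by
  have hq : (X ^ 8 : ℤ[T;T⁻¹]⟦X⟧) ∈ Ideal.jacobson ⊥ :=
    Ideal.pow_mem_of_mem _ X_mem_jacobson_bot 8 (by norm_num)
  have hC : PowerSeries.C (1 - T (-2) : ℤ[T;T⁻¹]) = 1 + ↑negY⁻¹ := by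
    simp [negY, sub_eq_add_neg]
  have htail (f : ℤ[T;T⁻¹]⟦X⟧) :
      coeff e ((↑negY⁻¹ : ℤ[T;T⁻¹]⟦X⟧) * (X ^ 8) ^ (e + 1) * f) = 0 := by
    rw [mul_comm _ ((X ^ 8) ^ (e + 1)), mul_assoc, ← pow_mul, coeff_X_pow_mul', if_neg (by omega)]
  simp_rw [tripleFactor_eq]
  rw [hC, jacobi_triple_product_truncated, add_mul, add_mul, map_add, mul_assoc (_ * _), htail,
    add_zero, one_mul, mul_sum, map_sum]
  refine sum_congr rfl fun m hm => ?_
  have hmN : m.natAbs ≤ e + 1 := by rw [mem_Icc] at hm; omega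
  have hdvd : (X : ℤ[T;T⁻¹]⟦X⟧) ^ (8 * (e + 1 + 1 - m.natAbs)) ∣
      qPochhammer (X ^ 8) (e + 1) * qCentralBinom (X ^ 8) (e + 1) m - 1 := by
    rw [pow_mul]
    exact pow_dvd_qPochhammer_mul_qCentralBinom_sub_one hq hmN
  rw [val_negY_zpow, ← pow_mul,
    show ∀ a b c d : ℤ[T;T⁻¹]⟦X⟧, a * (b * c * d) = c * (d * (a * b)) from
      fun _ _ _ _ => by ring,
    coeff_C_mul, coeff_X_pow_mul_of_X_pow_dvd_sub_one hdvd, mul_ite, mul_one, mul_zero]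
  have hbound := natAbs_le_two_mul_triangular_add_one m
  omega

lemma coeff_succ_theta1 (e : ℕ) :
    coeff (e + 1) theta1 = T 1 * ∑ m ∈ Icc (-(e + 1 : ℕ) : ℤ) (e + 1 : ℕ),
        if e = 8 * triangular m then ((m.negOnePow : ℤ) : ℤ[T;T⁻¹]) * T (2 * m) else 0 := by
  rw [theta1, coeff_mk, mul_sum]
  refine sum_congr rfl fun m _ => ?_
  rw [mul_ite, mul_zero, mul_left_comm, ← T_add, add_comm 1 (2 * m)]
  have hsq : (2 * m + 1) ^ 2 = 4 * (m * (m + 1)) + 1 := by ring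
  refine if_congr ?_ rfl rfl
  rw [hsq, ← two_mul_triangular]
  omega

/-- **Jacobi triple product**:
`θ₁(q,y) = q^(1/4) (y^(1/2) - y^(-1/2)) ∏_{n≥1} (1-q^(2n))(1-q^(2n)y)(1-q^(2n)y^{-1})`. -/
theorem jacobi_triple_product (P : PowerSeries (LaurentPolynomial ℤ))
    (hP : ∀ d : ℕ, PowerSeries.coeff (R := LaurentPolynomial ℤ) d P =
      PowerSeries.coeff (R := LaurentPolynomial ℤ) d (∏ n ∈ Finset.range (d + 1), tripleFactor n)) :
    theta1 = PowerSeries.X *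
      (PowerSeries.C (R := LaurentPolynomial ℤ) (T 1 - T (-1))) * P := by
  ext (_ | e)
  · simp [theta1]
  · rw [mul_assoc, coeff_succ_X_mul, coeff_C_mul, hP e, coeff_succ_theta1,
      ← coeff_C_one_sub_T_mul_prod_tripleFactor, coeff_C_mul, ← mul_assoc, mul_sub, mul_one,
      ← T_add]
    norm_num

end
end

section
/- With notation as in the previous context, for two T-invariant 0-dimensional subschemes W, Z of the chart U = Spec ℂ[x,y] and a T-equivariant divisor a acting by a character of weight a_σ on U, the K-theory class of R Hom(𝒪_W, 𝒪_Z(a)) in K₀^T(pt) equals χ(a_σ) · conj(W) · Z · (1 - χ(v))(1 - χ(w)) / (χ(v)χ(w)), where conj denotes the involution of K₀^T(pt) = ℤ[t₁^{±}, t₂^{±}] sending χ(m) ↦ χ(-m), and W, Z denote the classes [𝒪_W], [𝒪_Z]. -/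
/-!
Write `D = (1 - t₁)(1 - t₂)`. Since `conj` inverts the characters, `conj D = D / (t₁ t₂)`, so the
dual class satisfies `conj W / (t₁ t₂) = (1 - conj P_W) / D`. With `p = conj P_W` and `q = P_Z`
the left-hand side becomes `χa ((1 - p) + (1 - q) - (1 - p q)) / D = χa (1 - p)(1 - q) / D`,
which is the right-hand side.
-/

section

variable {K : Type*} [Field K]

theorem one_sub_div_mul_one_sub_div_mul_self (p q D : K) :
    (1 - p) / D * ((1 - q) / D) * D = (1 - p) / D + (1 - q) / D - (1 - p * q) / D := by
  have hD : D⁻¹ * D⁻¹ * D = D⁻¹ := by simpa only [inv_inv] using mul_self_mul_inv D⁻¹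
  linear_combination (1 - p) * (1 - q) * hD

theorem one_sub_inv_mul_one_sub_inv_mul {t₁ t₂ : K} (ht₁ : t₁ ≠ 0) (ht₂ : t₂ ≠ 0) :
    (1 - t₁⁻¹) * (1 - t₂⁻¹) * (t₁ * t₂) = (1 - t₁) * (1 - t₂) := by
  field_simp
  ring

theorem map_one_sub_div_div_mul {t₁ t₂ : K} (ht₁ : t₁ ≠ 0) (ht₂ : t₂ ≠ 0) (conj : K →+* K)
    (hct₁ : conj t₁ = t₁⁻¹) (hct₂ : conj t₂ = t₂⁻¹) (P : K) :
    conj ((1 - P) / ((1 - t₁) * (1 - t₂))) / (t₁ * t₂) = (1 - conj P) / ((1 - t₁) * (1 - t₂)) := by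
  rw [map_div₀, map_mul, map_sub, map_sub, map_sub, map_one, hct₁, hct₂, div_div,
    one_sub_inv_mul_one_sub_inv_mul ht₁ ht₂]

end

theorem RHom_OW_OZ_general {K : Type*} [Field K] (t₁ t₂ χa PW PZ : K)
    (ht₁ : t₁ ≠ 0) (ht₂ : t₂ ≠ 0)
    (conj : K →+* K) (hct₁ : conj t₁ = t₁⁻¹) (hct₂ : conj t₂ = t₂⁻¹)
    (W Z RHomII : K)
    (hW : W = (1 - PW) / ((1 - t₁) * (1 - t₂)))
    (hZ : Z = (1 - PZ) / ((1 - t₁) * (1 - t₂)))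
    (hR : RHomII = χa * conj PW * PZ / ((1 - t₁) * (1 - t₂))) :
    χa * Z + χa * conj W / (t₁ * t₂) - (χa / ((1 - t₁) * (1 - t₂)) - RHomII)
      = χa * conj W * Z * ((1 - t₁) * (1 - t₂)) / (t₁ * t₂) := by
  have hW_dual : conj W / (t₁ * t₂) = (1 - conj PW) / ((1 - t₁) * (1 - t₂)) := by
    rw [hW]
    exact map_one_sub_div_div_mul ht₁ ht₂ conj hct₁ hct₂ PW
  calc χa * Z + χa * conj W / (t₁ * t₂) - (χa / ((1 - t₁) * (1 - t₂)) - RHomII)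
      = χa * (conj W / (t₁ * t₂) + Z - (1 - conj PW * PZ) / ((1 - t₁) * (1 - t₂))) := by
        rw [hR]
        ring
    _ = χa * (conj W / (t₁ * t₂) * Z * ((1 - t₁) * (1 - t₂))) := by
        rw [hW_dual, hZ, one_sub_div_mul_one_sub_div_mul_self]
    _ = χa * conj W * Z * ((1 - t₁) * (1 - t₂)) / (t₁ * t₂) := by ring

theorem RHom_OW_OZ {K : Type*} [Field K] (t₁ t₂ χa PW PZ : K)
    (ht₁ : t₁ ≠ 0) (ht₂ : t₂ ≠ 0) (h1 : 1 - t₁ ≠ 0) (h2 : 1 - t₂ ≠ 0)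
    (conj : K →+* K) (hct₁ : conj t₁ = t₁⁻¹) (hct₂ : conj t₂ = t₂⁻¹)
    (W Z RHomII : K)
    (hW : W = (1 - PW) / ((1 - t₁) * (1 - t₂)))
    (hZ : Z = (1 - PZ) / ((1 - t₁) * (1 - t₂)))
    (hR : RHomII = χa * conj PW * PZ / ((1 - t₁) * (1 - t₂))) :
    χa * Z + χa * conj W / (t₁ * t₂) - (χa / ((1 - t₁) * (1 - t₂)) - RHomII)
      = χa * conj W * Z * ((1 - t₁) * (1 - t₂)) / (t₁ * t₂) :=
  RHom_OW_OZ_general t₁ t₂ χa PW PZ ht₁ ht₂ conj hct₁ hct₂ W Z RHomII hW hZ hR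
end
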